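/- Let k be a commutative ring, A a unital k-algebra, and (C_r)_{r≥0} a unital formal associative deformation of A. Let e, f : ℕ → A be two ⋆-idempotents (e ⋆ e = e and f ⋆ f = f, where (a ⋆ b)(n) = ∑_{i+j+l=n} C_i(a(j), b(l))) with the same classical limit e(0) = f(0). Then e and f are conjugate by a ⋆-invertible element starting at 1: there exist u, v : ℕ → A with u(0) = 1 = v(0), u ⋆ v = 1 = v ⋆ u (where 1 denotes the sequence (1, 0, 0, …)), and f = u ⋆ e ⋆ v. -/

import Mathlib

/-!
The ⋆-product makes `ℕ → A` a ring in which every element with constant coefficient `1` is a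
unit: writing it as `1 - m` with `m(0) = 0`, the coefficients of the geometric series `∑ mʲ`
stabilise, since `mʲ` vanishes below degree `j`.

In any ring, idempotents `e`, `f` are intertwined by `u = f e + (1 - f)(1 - e)`, i.e. `u e = f u`,
and with `v = e f + (1 - e)(1 - f)` both `u v` and `v u` equal `1 - (e - f)²`. If `e(0) = f(0)`,
this element has constant coefficient `1`, so `u` is a unit with inverse `v (1 - (e - f)²)⁻¹`
and `f = u e u⁻¹`.
-/

open Finset

variable {k : Type*} [CommRing k] {A : Type*} [Ring A] [Algebra k A]

/-- The deformed (star) product of two formal series `a, b : ℕ → A`, with respect to a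
formal deformation `(C_r)`:  `(a ⋆ b)(n) = ∑_{i+j+l=n} C_i(a(j), b(l))`. -/
def starMul (C : ℕ → A →ₗ[k] A →ₗ[k] A) (a b : ℕ → A) : ℕ → A :=
  fun n => ∑ p ∈ antidiagonal n, ∑ q ∈ antidiagonal p.2, C p.1 (a q.1) (b q.2)

/-- The unit `1 = (1, 0, 0, …)` of the deformed algebra. -/
def starOne : ℕ → A := fun n => if n = 0 then 1 else 0

namespace IsIdempotentElem

variable {R : Type*} [Ring R] {e f : R}

theorem conjugator_mul_conjugator (he : IsIdempotentElem e) (hf : IsIdempotentElem f) :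
    (f * e + (1 - f) * (1 - e)) * (e * f + (1 - e) * (1 - f)) = 1 - (e - f) ^ 2 := by
  simp only [sq, mul_add, add_mul, mul_sub, sub_mul, mul_one, one_mul, mul_assoc, he.eq, hf.eq,
    he.mul_self_mul]
  abel

theorem conjugator_mul_self (he : IsIdempotentElem e) (hf : IsIdempotentElem f) :
    (f * e + (1 - f) * (1 - e)) * e = f * (f * e + (1 - f) * (1 - e)) := by
  simp only [mul_add, add_mul, mul_sub, sub_mul, mul_one, one_mul, mul_assoc, he.eq, hf.eq,
    hf.mul_self_mul]
  abel

theorem exists_unit_conj (he : IsIdempotentElem e) (hf : IsIdempotentElem f)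
    (h : IsUnit (1 - (e - f) ^ 2)) :
    ∃ u : Rˣ, (u : R) = f * e + (1 - f) * (1 - e) ∧ f = u * e * ↑u⁻¹ := by
  obtain ⟨z, hz⟩ := h
  set u := f * e + (1 - f) * (1 - e)
  set v := e * f + (1 - e) * (1 - f)
  have huv : u * v = z := by rw [hz]; exact conjugator_mul_conjugator he hf
  have hvu : v * u = z := by rw [hz, ← neg_sq, neg_sub]; exact conjugator_mul_conjugator hf he
  have hcomm : Commute u z := by
    show u * z = z * u
    simpa only [hvu, huv] using (mul_assoc u v u).symm
  refine ⟨⟨u, v * ↑z⁻¹, by rw [← mul_assoc, huv, z.mul_inv], ?_⟩, rfl, ?_⟩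
  · rw [mul_assoc, (hcomm.units_inv_right).eq.symm, ← mul_assoc, hvu, z.mul_inv]
  · show f = u * e * (v * ↑z⁻¹)
    rw [conjugator_mul_self he hf, mul_assoc, ← mul_assoc u, huv, z.mul_inv, mul_one]

end IsIdempotentElem

section Reindex

variable {M : Type*} [AddCommMonoid M] (n : ℕ) (F : ℕ → ℕ → ℕ → ℕ → ℕ → M)

theorem sum_antidiagonal_reassoc_left :
    (∑ p ∈ antidiagonal n, ∑ q ∈ antidiagonal p.2, ∑ r ∈ antidiagonal q.1,
        ∑ s ∈ antidiagonal r.2, F p.1 r.1 s.1 s.2 q.2) =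
      ∑ p ∈ antidiagonal n, ∑ q ∈ antidiagonal p.2, ∑ r ∈ antidiagonal q.2,
        ∑ s ∈ antidiagonal p.1, F s.1 s.2 q.1 r.1 r.2 := by
  rw [sum_sigma', sum_sigma', sum_sigma', sum_sigma', sum_sigma', sum_sigma']
  apply sum_nbij' (fun ⟨⟨⟨⟨i, _⟩, ⟨_, m⟩⟩, ⟨i', _⟩⟩, ⟨j, l⟩⟩ ↦
      ⟨⟨⟨⟨i + i', j + l + m⟩, ⟨j, l + m⟩⟩, ⟨l, m⟩⟩, ⟨i, i'⟩⟩)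
    (fun ⟨⟨⟨⟨_, _⟩, ⟨j, _⟩⟩, ⟨l, m⟩⟩, ⟨i, i'⟩⟩ ↦
      ⟨⟨⟨⟨i, i' + j + l + m⟩, ⟨i' + j + l, m⟩⟩, ⟨i', j + l⟩⟩, ⟨j, l⟩⟩) <;>
    rintro ⟨⟨⟨⟨_, _⟩, ⟨_, _⟩⟩, ⟨_, _⟩⟩, ⟨_, _⟩⟩ h <;>
    simp only [mem_sigma, HasAntidiagonal.mem_antidiagonal, Sigma.mk.inj_iff, Prod.mk.injEq,
      heq_eq_eq, and_true, true_and] at h ⊢ <;>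
    omega

theorem sum_antidiagonal_reassoc_right :
    (∑ p ∈ antidiagonal n, ∑ q ∈ antidiagonal p.2, ∑ r ∈ antidiagonal q.2,
        ∑ s ∈ antidiagonal r.2, F p.1 q.1 r.1 s.1 s.2) =
      ∑ p ∈ antidiagonal n, ∑ q ∈ antidiagonal p.2, ∑ r ∈ antidiagonal q.2,
        ∑ s ∈ antidiagonal p.1, F s.1 q.1 s.2 r.1 r.2 := by
  rw [sum_sigma', sum_sigma', sum_sigma', sum_sigma', sum_sigma', sum_sigma']
  apply sum_nbij' (fun ⟨⟨⟨⟨i, _⟩, ⟨j, _⟩⟩, ⟨i', _⟩⟩, ⟨l, m⟩⟩ ↦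
      ⟨⟨⟨⟨i + i', j + l + m⟩, ⟨j, l + m⟩⟩, ⟨l, m⟩⟩, ⟨i, i'⟩⟩)
    (fun ⟨⟨⟨⟨_, _⟩, ⟨j, _⟩⟩, ⟨l, m⟩⟩, ⟨i, i'⟩⟩ ↦
      ⟨⟨⟨⟨i, j + i' + l + m⟩, ⟨j, i' + l + m⟩⟩, ⟨i', l + m⟩⟩, ⟨l, m⟩⟩) <;>
    rintro ⟨⟨⟨⟨_, _⟩, ⟨_, _⟩⟩, ⟨_, _⟩⟩, ⟨_, _⟩⟩ h <;>
    simp only [mem_sigma, HasAntidiagonal.mem_antidiagonal, Sigma.mk.inj_iff, Prod.mk.injEq,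
      heq_eq_eq, and_true, true_and] at h ⊢ <;>
    omega

end Reindex

section StarMul

variable (C : ℕ → A →ₗ[k] A →ₗ[k] A)

theorem starMul_assoc
    (hassoc : ∀ (n : ℕ) (a b c : A),
      ∑ p ∈ antidiagonal n, C p.1 (C p.2 a b) c = ∑ p ∈ antidiagonal n, C p.1 a (C p.2 b c))
    (a b c : ℕ → A) : starMul C (starMul C a b) c = starMul C a (starMul C b c) := by
  funext n
  simp only [starMul, map_sum, LinearMap.coe_sum, Finset.sum_apply]
  rw [sum_antidiagonal_reassoc_left n fun i i' j l m => C i (C i' (a j) (b l)) (c m),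
    sum_antidiagonal_reassoc_right n fun i j i' l m => C i (a j) (C i' (b l) (c m))]
  exact sum_congr rfl fun p _ => sum_congr rfl fun q _ => sum_congr rfl fun r _ =>
    hassoc p.1 (a q.1) (b r.1) (c r.2)

theorem starOne_starMul (hC0 : ∀ a b : A, C 0 a b = a * b)
    (hunital : ∀ r : ℕ, 1 ≤ r → ∀ a : A, C r 1 a = 0 ∧ C r a 1 = 0) (a : ℕ → A) :
    starMul C starOne a = a := by
  funext n
  have inner (r m : ℕ) : ∑ q ∈ antidiagonal m, C r (starOne q.1) (a q.2) = C r 1 (a m) := by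
    rw [Nat.sum_antidiagonal_eq_sum_range_succ fun i j => C r (starOne i) (a j), sum_range_succ']
    simp [starOne]
  simp only [starMul, inner]
  rw [Nat.sum_antidiagonal_eq_sum_range_succ (fun i j => C i 1 (a j)), sum_range_succ']
  simp [hC0, (hunital _ (Nat.le_add_left 1 _) _).1]

theorem starMul_starOne (hC0 : ∀ a b : A, C 0 a b = a * b)
    (hunital : ∀ r : ℕ, 1 ≤ r → ∀ a : A, C r 1 a = 0 ∧ C r a 1 = 0) (a : ℕ → A) :
    starMul C a starOne = a := by
  funext n
  have inner (r m : ℕ) : ∑ q ∈ antidiagonal m, C r (a q.1) (starOne q.2) = C r (a m) 1 := by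
    rw [← Nat.sum_antidiagonal_swap]
    simp only [Prod.fst_swap, Prod.snd_swap]
    rw [Nat.sum_antidiagonal_eq_sum_range_succ fun i j => C r (a j) (starOne i), sum_range_succ']
    simp [starOne]
  simp only [starMul, inner]
  rw [Nat.sum_antidiagonal_eq_sum_range_succ (fun i j => C i (a j) 1), sum_range_succ']
  simp [hC0, (hunital _ (Nat.le_add_left 1 _) _).2]

theorem starMul_add (a b c : ℕ → A) : starMul C a (b + c) = starMul C a b + starMul C a c := by
  funext n
  simp only [starMul, Pi.add_apply, map_add, sum_add_distrib]

theorem add_starMul (a b c : ℕ → A) : starMul C (a + b) c = starMul C a c + starMul C b c := by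
  funext n
  simp only [starMul, Pi.add_apply, map_add, LinearMap.add_apply, sum_add_distrib]

theorem starMul_zero (a : ℕ → A) : starMul C a 0 = 0 := by
  funext n
  simp [starMul]

theorem zero_starMul (a : ℕ → A) : starMul C 0 a = 0 := by
  funext n
  simp [starMul]

theorem starMul_apply_zero (hC0 : ∀ a b : A, C 0 a b = a * b) (a b : ℕ → A) :
    starMul C a b 0 = a 0 * b 0 := by
  simp [starMul, hC0]

theorem starMul_apply_congr {a a' b b' : ℕ → A} {n : ℕ} (ha : ∀ i ≤ n, a i = a' i)
    (hb : ∀ i ≤ n, b i = b' i) : starMul C a b n = starMul C a' b' n := by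
  refine sum_congr rfl fun p hp => sum_congr rfl fun q hq => ?_
  rw [HasAntidiagonal.mem_antidiagonal] at hp hq
  rw [ha q.1 (by omega), hb q.2 (by omega)]

theorem starMul_apply_eq_zero_of_lt {a b : ℕ → A} {s t n : ℕ} (ha : ∀ i < s, a i = 0)
    (hb : ∀ i < t, b i = 0) (hn : n < s + t) : starMul C a b n = 0 := by
  refine sum_eq_zero fun p hp => sum_eq_zero fun q hq => ?_
  rw [HasAntidiagonal.mem_antidiagonal] at hp hq
  rcases lt_or_ge q.1 s with hq1 | hq1
  · rw [ha q.1 hq1, map_zero, LinearMap.zero_apply]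
  · rw [hb q.2 (by omega), map_zero]

end StarMul

structure UnitalDeformation (k A : Type*) [CommRing k] [Ring A] [Algebra k A] where
  C : ℕ → A →ₗ[k] A →ₗ[k] A
  C_zero : ∀ a b : A, C 0 a b = a * b
  assoc : ∀ (n : ℕ) (a b c : A),
    ∑ p ∈ antidiagonal n, C p.1 (C p.2 a b) c = ∑ p ∈ antidiagonal n, C p.1 a (C p.2 b c)
  unital : ∀ r : ℕ, 1 ≤ r → ∀ a : A, C r 1 a = 0 ∧ C r a 1 = 0

namespace UnitalDeformation

variable (D : UnitalDeformation k A)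

def Series (_ : UnitalDeformation k A) : Type _ := ℕ → A

instance : Ring D.Series :=
  { (inferInstance : AddCommGroup (ℕ → A)) with
    mul := starMul D.C
    one := starOne
    mul_assoc := starMul_assoc D.C D.assoc
    one_mul := starOne_starMul D.C D.C_zero D.unital
    mul_one := starMul_starOne D.C D.C_zero D.unital
    left_distrib := starMul_add D.C
    right_distrib := add_starMul D.C
    zero_mul := zero_starMul D.C
    mul_zero := starMul_zero D.C }

def coeff (n : ℕ) : D.Series →+ A where
  toFun x := (x : ℕ → A) n
  map_zero' := rfl
  map_add' _ _ := rfl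

def constCoeff : D.Series →+* A :=
  { D.coeff 0 with
    map_one' := rfl
    map_mul' := starMul_apply_zero D.C D.C_zero }

variable {D}

theorem coeff_mul_congr {x x' y y' : D.Series} {n : ℕ}
    (hx : ∀ i ≤ n, D.coeff i x = D.coeff i x') (hy : ∀ i ≤ n, D.coeff i y = D.coeff i y') :
    D.coeff n (x * y) = D.coeff n (x' * y') :=
  starMul_apply_congr D.C hx hy

theorem coeff_mul_eq_zero_of_lt {x y : D.Series} {s t n : ℕ} (hx : ∀ i < s, D.coeff i x = 0)
    (hy : ∀ i < t, D.coeff i y = 0) (hn : n < s + t) : D.coeff n (x * y) = 0 :=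
  starMul_apply_eq_zero_of_lt D.C hx hy hn

theorem coeff_pow_eq_zero_of_lt {m : D.Series} (hm : D.constCoeff m = 0) :
    ∀ {j i : ℕ}, i < j → D.coeff i (m ^ j) = 0
  | j + 1, i, hi => by
    rw [pow_succ]
    refine coeff_mul_eq_zero_of_lt (fun _ => coeff_pow_eq_zero_of_lt hm) (fun i hi => ?_) hi
    rwa [Nat.lt_one_iff.mp hi]

theorem Series.ext {x y : D.Series} (h : ∀ n, D.coeff n x = D.coeff n y) : x = y :=
  funext h

theorem isUnit_of_constCoeff_eq_one {x : D.Series} (hx : D.constCoeff x = 1) : IsUnit x := by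
  set m : D.Series := 1 - x with hm_def
  have hm : D.constCoeff m = 0 := by rw [hm_def, map_sub, map_one, hx, sub_self]
  let S (n : ℕ) : D.Series := ∑ j ∈ range (n + 1), m ^ j
  have hS {n i : ℕ} (hi : i ≤ n) : D.coeff i (S i) = D.coeff i (S n) := by
    simp only [S, map_sum]
    refine sum_subset (range_subset_range.2 (by omega)) fun j hj hj' => ?_
    rw [mem_range] at hj hj'
    exact coeff_pow_eq_zero_of_lt hm (by omega)
  let g : D.Series := fun n => D.coeff n (S n)
  have hg {n i : ℕ} (hi : i ≤ n) : D.coeff i g = D.coeff i (S n) := hS hi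
  have htrunc (n : ℕ) : D.coeff n (1 - m ^ (n + 1)) = D.coeff n 1 := by
    rw [map_sub, coeff_pow_eq_zero_of_lt hm n.lt_succ_self, sub_zero]
  have hx' : x = 1 - m := (sub_sub_cancel 1 x).symm
  refine ⟨⟨x, g, Series.ext fun n => ?_, Series.ext fun n => ?_⟩, rfl⟩
  · rw [coeff_mul_congr (fun _ _ => rfl) fun _ => hg, hx', mul_neg_geom_sum, htrunc]
  · rw [coeff_mul_congr (fun _ => hg) fun _ _ => rfl, hx', geom_sum_mul_neg, htrunc]

end UnitalDeformation

/-- For a unital formal associative deformation of a unital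
`k`-algebra `A`, two `⋆`-idempotents `e`, `f` with the same classical limit
`e(0) = f(0)` are conjugate by a `⋆`-invertible element starting at `1`:
`f = u ⋆ e ⋆ v` with `u ⋆ v = 1 = v ⋆ u` and `u(0) = 1 = v(0)`. -/
theorem star_idempotents_conjugate_of_eq_classical_limit
    (C : ℕ → A →ₗ[k] A →ₗ[k] A)
    (hC0 : ∀ a b : A, C 0 a b = a * b)
    (hassoc : ∀ (n : ℕ) (a b c : A),
      ∑ p ∈ antidiagonal n, C p.1 (C p.2 a b) c =
      ∑ p ∈ antidiagonal n, C p.1 a (C p.2 b c))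
    (hunital : ∀ r : ℕ, 1 ≤ r → ∀ a : A, C r 1 a = 0 ∧ C r a 1 = 0)
    (e f : ℕ → A)
    (he : starMul C e e = e) (hf : starMul C f f = f)
    (h0 : e 0 = f 0) :
    ∃ u v : ℕ → A, u 0 = 1 ∧ v 0 = 1 ∧
      starMul C u v = starOne ∧ starMul C v u = starOne ∧
      f = starMul C (starMul C u e) v := by
  let D : UnitalDeformation k A := ⟨C, hC0, hassoc, hunital⟩
  let E : D.Series := e
  let F : D.Series := f
  have hE : IsIdempotentElem E := he
  have hF : IsIdempotentElem F := hf
  have hcoeff : D.constCoeff F = D.constCoeff E := h0.symm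
  have hz : IsUnit (1 - (E - F) ^ 2) := by
    refine UnitalDeformation.isUnit_of_constCoeff_eq_one ?_
    rw [map_sub, map_one, map_pow, map_sub, hcoeff, sub_self, zero_pow two_ne_zero, sub_zero]
  obtain ⟨u, hu, hconj⟩ := hE.exists_unit_conj hF hz
  have hu0 : D.constCoeff u = 1 := by
    have he0 := hE.map D.constCoeff
    rw [hu, map_add, map_mul, map_mul, map_sub, map_sub, map_one, hcoeff, he0.eq, he0.one_sub.eq,
      add_sub_cancel]
  have hv0 : D.constCoeff ↑u⁻¹ = 1 := by
    have h := congrArg D.constCoeff u.inv_mul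
    rwa [map_mul, hu0, mul_one, map_one] at h
  exact ⟨(u : D.Series), (↑u⁻¹ : D.Series), hu0, hv0, u.mul_inv, u.inv_mul, hconj⟩
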